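/- Let p be a prime, k a field of characteristic p, and d ≥ 1 an integer with p ∤ d. In R = k[x_0, …, x_{N−1}] take f = x_0^d + ⋯ + x_{N−1}^d and let 𝔇 be the associated relations submodule. Let w, w' : Fin N → ℕ be exponent vectors such that for each i: w'_i ≤ w_i, w_i ≡ w'_i (mod d), and for every integer j with 1 ≤ j ≤ (w_i − w'_i)/d one has w_i − d·j ≢ 0 (mod p). Then x^w ≡ c · x^{w'} (mod 𝔇), where c = ∏_i ∏_{j=1}^{(w_i − w'_i)/d} (−(w_i − d·j)/d) ∈ k is nonzero. (This is the iterated pole-order reduction underlying the proofs of Theorems 8.1, 8.2 and 8.4.) -/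

import Mathlib

/-!
For `f = ∑ xᵢ^d` the generator `Dᵢ(x^s) = sᵢ·x^s + d·x^(s + d·eᵢ)` of `𝔇` says that
`x^(s + d·eᵢ) ≡ −(sᵢ/d)·x^s`, as soon as `d` is invertible in `k`. Lowering the exponent of each
variable by `d`, one step at a time, from `wᵢ` down to `w'ᵢ` multiplies by the factors
`−(wᵢ − d·j)/d`, which are nonzero by the hypothesis on `wᵢ − d·j`.
-/

open MvPolynomial

/-- The operator `D_i(g) = x_i·(∂g/∂x_i) + x_i·(∂f/∂x_i)·g` associated to `f`. -/
noncomputable def Dop {k : Type*} [Field k] {N : ℕ} (f : MvPolynomial (Fin N) k)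
    (i : Fin N) (g : MvPolynomial (Fin N) k) : MvPolynomial (Fin N) k :=
  X i * pderiv i g + X i * pderiv i f * g

/-- The relations submodule `𝔇` associated to `f`: the `k`-linear span of
all the `D_i(g)` for `g` a polynomial and `i` an index. -/
noncomputable def relMod {k : Type*} [Field k] {N : ℕ} (f : MvPolynomial (Fin N) k) :
    Submodule k (MvPolynomial (Fin N) k) :=
  Submodule.span k {h | ∃ i g, h = Dop f i g}

lemma prod_X_pow_eq_monomial_equivFunOnFinite {σ R : Type*} [Fintype σ] [CommSemiring R]
    (u : σ → ℕ) : ∏ i, (X i : MvPolynomial σ R) ^ u i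
      = monomial (Finsupp.equivFunOnFinite.symm u) 1 := by
  rw [monomial_eq, C_1, one_mul, Finsupp.prod_fintype] <;> simp

section

variable {k : Type*} [Field k] {N : ℕ}

lemma X_mul_pderiv_sum_X_pow (d : ℕ) (i : Fin N) :
    X i * pderiv i (∑ j : Fin N, X j ^ d : MvPolynomial (Fin N) k)
      = monomial (Finsupp.single i d) (d : k) := by
  simp_rw [map_sum, Finset.mul_sum, X_pow_eq_monomial, X_mul_pderiv_monomial]
  rw [Finset.sum_eq_single i (fun j _ hji => by simp [Finsupp.single_eq_of_ne hji.symm])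
    (by simp)]
  simp [smul_monomial]

lemma Dop_sum_X_pow_monomial (d : ℕ) (i : Fin N) (s : Fin N →₀ ℕ) :
    Dop (∑ j : Fin N, X j ^ d) i (monomial s (1 : k))
      = (s i : k) • monomial s 1 + (d : k) • monomial (s + Finsupp.single i d) 1 := by
  rw [Dop, X_mul_pderiv_monomial, X_mul_pderiv_sum_X_pow, monomial_mul, add_comm s,
    smul_monomial, smul_monomial, smul_monomial, Nat.smul_one_eq_cast]
  simp only [smul_eq_mul, mul_one]

lemma monomial_add_single_smodEq {d : ℕ} (hd : (d : k) ≠ 0) (i : Fin N) (s : Fin N →₀ ℕ) :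
    monomial (s + Finsupp.single i d) (1 : k)
      ≡ (-((s i : k) / d)) • monomial s 1 [SMOD relMod (∑ j : Fin N, X j ^ d)] := by
  have hD : Dop (∑ j : Fin N, X j ^ d) i (monomial s (1 : k)) ∈ relMod (∑ j : Fin N, X j ^ d) :=
    Submodule.subset_span ⟨i, _, rfl⟩
  rw [SModEq.sub_mem]
  convert Submodule.smul_mem _ (d : k)⁻¹ hD using 1
  rw [Dop_sum_X_pow_monomial, smul_add, smul_smul, smul_smul, inv_mul_cancel₀ hd, one_smul,
    neg_smul, sub_neg_eq_add, add_comm, div_eq_inv_mul]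

variable (k) in
/-- The factor picked up by lowering the exponent `a` of one variable by `d`, `m` times. -/
noncomputable def reductionCoeff (d a m : ℕ) : k :=
  ∏ j ∈ Finset.Icc 1 m, -(((a - d * j : ℕ) : k) / d)

lemma reductionCoeff_zero (d a : ℕ) : reductionCoeff k d a 0 = 1 := by
  simp [reductionCoeff]

lemma reductionCoeff_succ (d a m : ℕ) :
    reductionCoeff k d (a + d * (m + 1)) (m + 1)
      = reductionCoeff k d (a + d + d * m) m * -((a : k) / d) := by
  rw [reductionCoeff, Finset.prod_Icc_succ_top (by omega), Nat.add_sub_cancel, reductionCoeff,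
    mul_add_one, ← add_assoc, add_right_comm]

lemma reductionCoeff_ne_zero {p : ℕ} [CharP k p] {d a m : ℕ} (hd : ¬ p ∣ d)
    (ha : ∀ j, 1 ≤ j → j ≤ m → ¬ p ∣ (a - d * j)) : reductionCoeff k d a m ≠ 0 := by
  refine Finset.prod_ne_zero_iff.mpr fun j hj => neg_ne_zero.mpr (div_ne_zero ?_ ?_)
  · rw [Finset.mem_Icc] at hj
    exact mt (CharP.cast_eq_zero_iff k p _).mp (ha j hj.1 hj.2)
  · exact mt (CharP.cast_eq_zero_iff k p _).mp hd

lemma monomial_add_single_mul_smodEq {d : ℕ} (hd : (d : k) ≠ 0) (i : Fin N) (m : ℕ)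
    (s : Fin N →₀ ℕ) :
    monomial (s + Finsupp.single i (d * m)) (1 : k)
      ≡ reductionCoeff k d (s i + d * m) m • monomial s 1
        [SMOD relMod (∑ j : Fin N, X j ^ d)] := by
  induction m generalizing s with
  | zero => simp [reductionCoeff_zero]
  | succ m ih =>
    have hs : s + Finsupp.single i (d * (m + 1))
        = s + Finsupp.single i d + Finsupp.single i (d * m) := by
      rw [add_assoc, ← Finsupp.single_add, mul_add_one, add_comm (d * m)]
    rw [hs, reductionCoeff_succ, mul_smul]
    refine (ih _).trans ?_
    simpa using (monomial_add_single_smodEq hd i s).smul (reductionCoeff k d (s i + d + d * m) m)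

lemma monomial_add_sum_single_mul_smodEq {d : ℕ} (hd : (d : k) ≠ 0) (m : Fin N → ℕ)
    (S : Finset (Fin N)) (s : Fin N →₀ ℕ) :
    monomial (s + ∑ i ∈ S, Finsupp.single i (d * m i)) (1 : k)
      ≡ (∏ i ∈ S, reductionCoeff k d (s i + d * m i) (m i)) • monomial s 1
        [SMOD relMod (∑ j : Fin N, X j ^ d)] := by
  classical
  induction S using Finset.induction_on generalizing s with
  | empty => simp
  | insert a S ha ih =>
    have hcoeff : ∏ i ∈ S, reductionCoeff k d ((s + Finsupp.single a (d * m a)) i + d * m i) (m i)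
        = ∏ i ∈ S, reductionCoeff k d (s i + d * m i) (m i) :=
      Finset.prod_congr rfl fun i hi => by
        rw [Finsupp.add_apply, Finsupp.single_eq_of_ne (ne_of_mem_of_not_mem hi ha), add_zero]
    rw [Finset.sum_insert ha, ← add_assoc, Finset.prod_insert ha,
      mul_comm (reductionCoeff k d (s a + d * m a) (m a)), mul_smul]
    refine (ih _).trans ?_
    rw [hcoeff]
    exact (monomial_add_single_mul_smodEq hd a (m a) s).smul _

end

theorem stmt9_general (p : ℕ) (k : Type*) [Field k] [CharP k p]
    (d : ℕ) (hpd : ¬ p ∣ d) (N : ℕ) (w w' : Fin N → ℕ)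
    (hle : ∀ i, w' i ≤ w i)
    (hmod : ∀ i, w i % d = w' i % d)
    (hnz : ∀ i, ∀ j : ℕ, 1 ≤ j → j ≤ (w i - w' i) / d → ¬ p ∣ (w i - d * j)) :
    (∏ i : Fin N, ∏ j ∈ Finset.Icc 1 ((w i - w' i) / d),
        (-(((w i - d * j : ℕ) : k) / (d : k)))) ≠ 0 ∧
    (∏ i : Fin N, X i ^ w i)
      - C (∏ i : Fin N, ∏ j ∈ Finset.Icc 1 ((w i - w' i) / d),
            (-(((w i - d * j : ℕ) : k) / (d : k))))
        * ∏ i : Fin N, X i ^ w' i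
      ∈ relMod (∑ i : Fin N, X i ^ d) := by
  have hdk : (d : k) ≠ 0 := mt (CharP.cast_eq_zero_iff k p d).mp hpd
  have hw : ∀ i, w' i + d * ((w i - w' i) / d) = w i := fun i => by
    rw [Nat.mul_div_cancel' ((Nat.modEq_iff_dvd' (hle i)).mp (hmod i).symm)]
    exact Nat.add_sub_cancel' (hle i)
  refine ⟨Finset.prod_ne_zero_iff.mpr fun i _ => reductionCoeff_ne_zero hpd (hnz i), ?_⟩
  have hexp : Finsupp.equivFunOnFinite.symm w'
      + ∑ i, Finsupp.single i (d * ((w i - w' i) / d)) = Finsupp.equivFunOnFinite.symm w := by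
    ext i
    simp [Finsupp.single_apply, hw]
  have hcoeff : ∏ i, ∏ j ∈ Finset.Icc 1 ((w i - w' i) / d), -(((w i - d * j : ℕ) : k) / d)
      = ∏ i, reductionCoeff k d (Finsupp.equivFunOnFinite.symm w' i + d * ((w i - w' i) / d))
          ((w i - w' i) / d) := by
    simp only [Finsupp.coe_equivFunOnFinite_symm, hw, reductionCoeff]
  rw [C_mul', ← SModEq.sub_mem, prod_X_pow_eq_monomial_equivFunOnFinite,
    prod_X_pow_eq_monomial_equivFunOnFinite, ← hexp, hcoeff]
  exact monomial_add_sum_single_mul_smodEq hdk _ Finset.univ _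

/-- Iterated pole-order reduction for `f = x_0^d + ⋯ + x_{N−1}^d`, `p ∤ d`:
if `w' ≤ w` componentwise with `w_i ≡ w'_i (mod d)` and `w_i − d·j ≢ 0 (mod p)` for all
`1 ≤ j ≤ (w_i − w'_i)/d`, then `x^w ≡ c·x^{w'} (mod 𝔇)` where
`c = ∏_i ∏_{j=1}^{(w_i−w'_i)/d} (−(w_i − d·j)/d) ∈ k` is nonzero. -/
theorem stmt9 (p : ℕ) (hp : p.Prime) (k : Type*) [Field k] [CharP k p]
    (d : ℕ) (hd : 1 ≤ d) (hpd : ¬ p ∣ d) (N : ℕ) (w w' : Fin N → ℕ)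
    (hle : ∀ i, w' i ≤ w i)
    (hmod : ∀ i, w i % d = w' i % d)
    (hnz : ∀ i, ∀ j : ℕ, 1 ≤ j → j ≤ (w i - w' i) / d → ¬ p ∣ (w i - d * j)) :
    (∏ i : Fin N, ∏ j ∈ Finset.Icc 1 ((w i - w' i) / d),
        (-(((w i - d * j : ℕ) : k) / (d : k)))) ≠ 0 ∧
    (∏ i : Fin N, X i ^ w i)
      - C (∏ i : Fin N, ∏ j ∈ Finset.Icc 1 ((w i - w' i) / d),
            (-(((w i - d * j : ℕ) : k) / (d : k))))
        * ∏ i : Fin N, X i ^ w' i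
      ∈ relMod (∑ i : Fin N, X i ^ d) :=
  stmt9_general p k d hpd N w w' hle hmod hnz
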